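/- On a Kähler surface with nonnegative bisectional curvature, the integrand of c₁² is pointwise controlled by the second Chern integrand: there is a constant C' = C'(ε) such that whenever the curvature components satisfy R_{1̄11̄1}, R_{2̄22̄2}, R_{1̄12̄2} ≥ 0 and the Ricci eigenvalues R_{1̄1} = R_{1̄11̄1} + R_{1̄12̄2} and R_{2̄2} = R_{2̄22̄2} + R_{1̄12̄2} are comparable (each between ε/2·M and 2M for some M > 0), then R_{1̄1}R_{2̄2} ≤ C'·(R_{1̄11̄1}R_{2̄22̄2} + 2R²_{1̄12̄2}). -/
import Mathlib


/-- On a Kähler surface with nonnegative bisectional curvature, the integrand of `c₁²`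
is pointwise controlled by the second Chern integrand: for every `ε > 0` there is a
constant `C'(ε) > 0` such that whenever `a = R_{1̄11̄1} ≥ 0`, `b = R_{2̄22̄2} ≥ 0`,
`c = R_{1̄12̄2} ≥ 0` and the Ricci eigenvalues `a + c` and `b + c` both lie in
`[ε/2·M, 2M]` for some `M > 0`, we have `(a+c)(b+c) ≤ C'(ε)·(ab + 2c²)`. -/
theorem c1sq_integrand_le_c2_integrand :
    ∀ ε : ℝ, 0 < ε → ∃ C' : ℝ, 0 < C' ∧
      ∀ a b c M : ℝ, 0 ≤ a → 0 ≤ b → 0 ≤ c → 0 < M →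
        ε / 2 * M ≤ a + c → a + c ≤ 2 * M →
        ε / 2 * M ≤ b + c → b + c ≤ 2 * M →
        (a + c) * (b + c) ≤ C' * (a * b + 2 * c ^ 2) := by
  intro ε hε
  refine ⟨1 + 16 / ε, by positivity, ?_⟩
  intro a b c M ha hb hc hM h1 h2 h3 h4
  have hab : 0 ≤ a * b := mul_nonneg ha hb
  rcases le_or_gt (ε / 4 * M) c with hcase | hcase
  · have key : c * (a + b) ≤ 16 / ε * c ^ 2 := by
      have h4M : a + b ≤ 4 * M := by linarith
      have : 4 * M ≤ 16 / ε * c := by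
        rw [div_mul_eq_mul_div, le_div_iff₀ hε]
        nlinarith
      nlinarith
    nlinarith [mul_nonneg (by positivity : (0:ℝ) ≤ 16 / ε) hab]
  · have haa : ε / 4 * M ≤ a := by linarith
    have hbb : ε / 4 * M ≤ b := by linarith
    have key : c * (a + b) ≤ 16 / ε * (a * b) := by
      have h1 : c * (a + b) ≤ ε / 4 * M * (4 * M) := by nlinarith
      have h2 : ε * M * M ≤ 16 / ε * (a * b) := by
        rw [div_mul_eq_mul_div, le_div_iff₀ hε]
        nlinarith
      nlinarith
    nlinarith [mul_nonneg (by positivity : (0:ℝ) ≤ 16 / ε) (sq_nonneg c)]
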